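/- Let P* be an order-preserving semiflow on 𝒫₂(ℝ) (jointly continuous, P*₀ = id, P*ₜ∘P*ₛ = P*_{t+s}, and μ ≤_st ν implies P*ₜμ ≤_st P*ₜν). Suppose there exists an eventually positively invariant, order bounded, closed set K ⊂ 𝒫₂(ℝ) attracting every bounded subset of 𝒫₂(ℝ). Then ω(K) = ⋂_{t≥0} P*ₜK is the global attractor, and there exist invariant measures ν̲ = inf_{≤_st} ω(K) and ν̄ = sup_{≤_st} ω(K), both belonging to ω(K), such that ω(K) ⊆ [ν̲, ν̄]. -/

import Mathlib

open MeasureTheory Filter Set ENNReal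

noncomputable section

/-- The stochastic order on measures on ℝ: `μ ≤_st ν` iff `∫ f dμ ≤ ∫ f dν`
for every bounded increasing function `f : ℝ → ℝ`. -/
def StOrder (μ ν : Measure ℝ) : Prop :=
  ∀ f : ℝ → ℝ, Monotone f → (∃ C : ℝ, ∀ x, |f x| ≤ C) →
    ∫ x, f x ∂μ ≤ ∫ x, f x ∂ν

/-- `𝒫₂(ℝ)`: probability measures on ℝ with finite second moment. -/
def P2 : Set (Measure ℝ) :=
  {μ | IsProbabilityMeasure μ ∧ Integrable (fun x : ℝ => x ^ 2) μ}

/-- The `p`-Wasserstein distance (ENNReal-valued), as an infimum over couplings. -/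
def Wp (p : ℝ) (μ ν : Measure ℝ) : ℝ≥0∞ :=
  ⨅ (π : Measure (ℝ × ℝ)) (_ : π.map Prod.fst = μ) (_ : π.map Prod.snd = ν),
    (∫⁻ q, ENNReal.ofReal (|q.1 - q.2| ^ p) ∂π) ^ (1 / p)

/-- The 2-Wasserstein distance. -/
def W2 (μ ν : Measure ℝ) : ℝ≥0∞ := Wp 2 μ ν

/-- Convergence of a sequence of measures in the 2-Wasserstein distance. -/
def W2Tendsto (μs : ℕ → Measure ℝ) (μ : Measure ℝ) : Prop :=
  Tendsto (fun n => W2 (μs n) μ) atTop (nhds 0)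

/-- `P` is a (jointly sequentially continuous) semiflow on `𝒫₂(ℝ)`. -/
def Semiflow (P : ℝ → Measure ℝ → Measure ℝ) : Prop :=
  (∀ t : ℝ, 0 ≤ t → ∀ μ ∈ P2, P t μ ∈ P2) ∧
  (∀ μ ∈ P2, P 0 μ = μ) ∧
  (∀ t s : ℝ, 0 ≤ t → 0 ≤ s → ∀ μ ∈ P2, P t (P s μ) = P (t + s) μ) ∧
  (∀ (ts : ℕ → ℝ) (t : ℝ) (μs : ℕ → Measure ℝ) (μ : Measure ℝ),
    (∀ n, 0 ≤ ts n) → 0 ≤ t → Tendsto ts atTop (nhds t) →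
    (∀ n, μs n ∈ P2) → μ ∈ P2 → W2Tendsto μs μ →
    Tendsto (fun n => W2 (P (ts n) (μs n)) (P t μ)) atTop (nhds 0))

/-- `P` preserves the stochastic order on `𝒫₂(ℝ)`. -/
def OrderPreserving (P : ℝ → Measure ℝ → Measure ℝ) : Prop :=
  ∀ t : ℝ, 0 ≤ t → ∀ μ ν : Measure ℝ, μ ∈ P2 → ν ∈ P2 →
    StOrder μ ν → StOrder (P t μ) (P t ν)

/-- `K` attracts `B`: `𝒲₂(P*ₜ B, K) → 0` as `t → ∞`. -/
def Attracts (P : ℝ → Measure ℝ → Measure ℝ) (K B : Set (Measure ℝ)) : Prop :=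
  Tendsto (fun t : ℝ => ⨆ μ ∈ B, ⨅ ν ∈ K, W2 (P t μ) ν) atTop (nhds 0)

/-- A bounded subset of the 2-Wasserstein space. -/
def BoundedSet (B : Set (Measure ℝ)) : Prop :=
  ∃ R : ℝ≥0∞, R < ⊤ ∧ ∀ μ ∈ B, W2 μ (Measure.dirac 0) ≤ R

/-- `ν` is an invariant measure of `P`. -/
def Invariant (P : ℝ → Measure ℝ → Measure ℝ) (ν : Measure ℝ) : Prop :=
  ∀ t : ℝ, 0 ≤ t → P t ν = ν

/-- `A` is an invariant set of `P`. -/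
def InvariantSet (P : ℝ → Measure ℝ → Measure ℝ) (A : Set (Measure ℝ)) : Prop :=
  ∀ t : ℝ, 0 ≤ t → P t '' A = A

/-- The ω-limit set of `B` (sequential characterization). -/
def OmegaLimit (P : ℝ → Measure ℝ → Measure ℝ) (B : Set (Measure ℝ)) :
    Set (Measure ℝ) :=
  {ν | ν ∈ P2 ∧ ∃ (ts : ℕ → ℝ) (μs : ℕ → Measure ℝ),
    (∀ n, μs n ∈ B) ∧ Tendsto ts atTop atTop ∧
    Tendsto (fun n => W2 (P (ts n) (μs n)) ν) atTop (nhds 0)}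

/-- Sequential compactness of a set of measures in the 2-Wasserstein distance. -/
def SeqCompact (A : Set (Measure ℝ)) : Prop :=
  ∀ ρ : ℕ → Measure ℝ, (∀ n, ρ n ∈ A) →
    ∃ (φ : ℕ → ℕ) (ν : Measure ℝ), StrictMono φ ∧ ν ∈ A ∧
      W2Tendsto (fun n => ρ (φ n)) ν

/-!
Order intervals `[a, b]` with `a, b ∈ 𝒫₂(ℝ)` are `W₂`-compact (Helly): along a subsequence the
cdfs converge at the rationals, so the quantile functions converge almost everywhere on `(0, 1)`,
and they are squeezed between the quantile functions of `a` and `b`, which are square integrable;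
dominated convergence and the monotone coupling then give `W₂` convergence. So `K` is compact and,
attracting every bounded set, every orbit `P*ₜ μ` has limit points in `K` as `t → ∞`. Shifting
times back by `s` and using the continuity of the semiflow exhibits each limit point as `P*ₛ η`
with `η` again a limit point in `K`; this gives `ω(K) = ⋂ₛ P*ₛ K`, invariance and attraction.
The extremal invariant measures are limit points of the orbits of `a` and `b`: each `ρ ∈ ω(K)`
is `P*ₜ ρ'` with `a ≤ ρ' ≤ b`, so `P*ₜ a ≤ ρ ≤ P*ₜ b`, and the stochastic order is closed
under `W₂` limits.
-/

open ProbabilityTheory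
open scoped NNReal

lemma StieltjesFunction.le_apply_of_forall_lt (f : StieltjesFunction ℝ) {a x : ℝ}
    (h : ∀ y, x < y → a ≤ f y) : a ≤ f x :=
  ge_of_tendsto ((f.right_continuous x).tendsto.mono_left (nhdsWithin_mono x Ioi_subset_Ici_self))
    (eventually_nhdsWithin_of_forall h)

section Quantile

variable {μ : Measure ℝ}

def unitVolume : Measure ℝ := volume.restrict (Ioo 0 1)

instance : IsProbabilityMeasure unitVolume :=
  ⟨by simp [unitVolume]⟩

/-- The generalized inverse of the cdf, with the junk value `0` off `(0, 1)`. -/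
def quantile (μ : Measure ℝ) (u : ℝ) : ℝ :=
  if u ∈ Ioo (0 : ℝ) 1 then sInf {x | u ≤ cdf μ x} else 0

lemma quantile_le_iff [IsProbabilityMeasure μ] {u x : ℝ} (hu : u ∈ Ioo (0 : ℝ) 1) :
    quantile μ u ≤ x ↔ u ≤ cdf μ x := by
  have hne : {x | u ≤ cdf μ x}.Nonempty :=
    (((tendsto_cdf_atTop μ).eventually (eventually_gt_nhds hu.2)).exists).imp fun _ h => h.le
  have hbdd : BddBelow {x | u ≤ cdf μ x} := by
    obtain ⟨x₀, hx₀⟩ := ((tendsto_cdf_atBot μ).eventually (eventually_lt_nhds hu.1)).exists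
    exact ⟨x₀, fun y hy => le_of_not_gt fun hyx => (hy.trans ((cdf μ).mono hyx.le)).not_gt hx₀⟩
  rw [quantile, if_pos hu]
  refine ⟨fun h => ?_, fun h => csInf_le hbdd h⟩
  refine (cdf μ).le_apply_of_forall_lt fun y hy => ?_
  obtain ⟨z, hz, hzy⟩ := (csInf_lt_iff hbdd hne).mp (h.trans_lt hy)
  exact hz.trans ((cdf μ).mono hzy.le)

lemma lt_quantile_iff [IsProbabilityMeasure μ] {u x : ℝ} (hu : u ∈ Ioo (0 : ℝ) 1) :
    x < quantile μ u ↔ cdf μ x < u := by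
  simpa only [not_le] using (quantile_le_iff hu).not

lemma monotoneOn_quantile [IsProbabilityMeasure μ] : MonotoneOn (quantile μ) (Ioo 0 1) :=
  fun _ hu _ hv huv => (quantile_le_iff hu).mpr <| huv.trans ((quantile_le_iff hv).mp le_rfl)

@[fun_prop]
lemma measurable_quantile [IsProbabilityMeasure μ] : Measurable (quantile μ) := by
  refine measurable_of_Iic fun x => ?_
  have : quantile μ ⁻¹' Iic x =
      (Ioo 0 1 ∩ Iic (cdf μ x)) ∪ ((Ioo 0 1)ᶜ ∩ {_u | (0 : ℝ) ≤ x}) := by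
    ext u
    by_cases hu : u ∈ Ioo (0 : ℝ) 1
    · simp [quantile_le_iff hu, hu]
    · simp [quantile, hu]
  rw [this]
  exact (measurableSet_Ioo.inter measurableSet_Iic).union
    (measurableSet_Ioo.compl.inter (MeasurableSet.const _))

lemma map_quantile [IsProbabilityMeasure μ] : unitVolume.map (quantile μ) = μ := by
  have : IsProbabilityMeasure (unitVolume.map (quantile μ)) :=
    Measure.isProbabilityMeasure_map measurable_quantile.aemeasurable
  refine Measure.ext_of_Iic _ _ fun x => ?_
  rw [Measure.map_apply measurable_quantile measurableSet_Iic, unitVolume,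
    Measure.restrict_apply (measurable_quantile measurableSet_Iic), ← ofReal_cdf μ x]
  have hset : quantile μ ⁻¹' Iic x ∩ Ioo 0 1 = Ioo 0 1 ∩ Iic (cdf μ x) := by
    ext u
    simp only [mem_inter_iff, mem_preimage, mem_Iic]
    exact ⟨fun h => ⟨h.2, (quantile_le_iff h.2).mp h.1⟩,
      fun h => ⟨(quantile_le_iff h.1).mpr h.2, h.1⟩⟩
  rw [hset]
  have hc := cdf_le_one μ x
  refine le_antisymm ?_ ?_
  · calc volume (Ioo 0 1 ∩ Iic (cdf μ x)) ≤ volume (Icc 0 (cdf μ x)) :=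
          measure_mono fun u hu => ⟨hu.1.1.le, hu.2⟩
      _ = _ := by rw [Real.volume_Icc, sub_zero]
  · calc ENNReal.ofReal (cdf μ x) = volume (Ioo 0 (cdf μ x)) := by rw [Real.volume_Ioo, sub_zero]
      _ ≤ volume (Ioo 0 1 ∩ Iic (cdf μ x)) :=
          measure_mono fun u hu => ⟨⟨hu.1, hu.2.trans_le hc⟩, hu.2.le⟩

lemma lintegral_quantile [IsProbabilityMeasure μ] {f : ℝ → ℝ≥0∞} (hf : Measurable f) :
    ∫⁻ u, f (quantile μ u) ∂unitVolume = ∫⁻ x, f x ∂μ := by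
  rw [← lintegral_map hf measurable_quantile, map_quantile]

lemma integral_quantile [IsProbabilityMeasure μ] {f : ℝ → ℝ} (hf : Measurable f) :
    ∫ u, f (quantile μ u) ∂unitVolume = ∫ x, f x ∂μ := by
  rw [← integral_map measurable_quantile.aemeasurable hf.aestronglyMeasurable, map_quantile]

end Quantile

section CdfOrder

variable {μ ν : Measure ℝ}

/-- `μ` lies below `ν` in the stochastic order: the cdf of `μ` lies above that of `ν`. -/
def CdfLE (μ ν : Measure ℝ) : Prop := ∀ x, cdf ν x ≤ cdf μ x

lemma CdfLE.quantile_le [IsProbabilityMeasure μ] [IsProbabilityMeasure ν] (h : CdfLE μ ν)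
    (u : ℝ) : quantile μ u ≤ quantile ν u := by
  by_cases hu : u ∈ Ioo (0 : ℝ) 1
  · rw [quantile_le_iff hu]
    exact ((quantile_le_iff hu).mp le_rfl).trans (h _)
  · simp [quantile, hu]

lemma cdfLE_iff_measure_Ioi_le [IsProbabilityMeasure μ] [IsProbabilityMeasure ν] :
    CdfLE μ ν ↔ ∀ x, μ (Ioi x) ≤ ν (Ioi x) := by
  refine forall_congr' fun x => ?_
  rw [cdf_eq_real, cdf_eq_real, measureReal_def, measureReal_def,
    ENNReal.toReal_le_toReal (measure_ne_top _ _) (measure_ne_top _ _), ← compl_Ioi,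
    prob_compl_eq_one_sub measurableSet_Ioi, prob_compl_eq_one_sub measurableSet_Ioi]
  exact ENNReal.sub_le_sub_iff_left prob_le_one one_ne_top

/-- The monotone (quantile) coupling realizes the stochastic order. -/
lemma stOrder_of_cdfLE [IsProbabilityMeasure μ] [IsProbabilityMeasure ν] (h : CdfLE μ ν) :
    StOrder μ ν := by
  rintro f hf ⟨C, hC⟩
  rw [← integral_quantile (μ := μ) hf.measurable, ← integral_quantile (μ := ν) hf.measurable]
  have hint : ∀ (ξ : Measure ℝ) [IsProbabilityMeasure ξ],
      Integrable (fun u => f (quantile ξ u)) unitVolume := fun ξ _ =>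
    .of_bound (hf.measurable.comp measurable_quantile).aestronglyMeasurable C
      (.of_forall fun _ => hC _)
  exact integral_mono (hint μ) (hint ν) fun u => hf (h.quantile_le u)

lemma StOrder.cdfLE [IsProbabilityMeasure μ] [IsProbabilityMeasure ν] (h : StOrder μ ν) :
    CdfLE μ ν := by
  refine cdfLE_iff_measure_Ioi_le.mpr fun x => ?_
  have hmono : Monotone ((Ioi x).indicator fun _ => (1 : ℝ)) := fun s t hst => by
    simp only [indicator_apply, mem_Ioi]
    split_ifs with hs ht <;> first | exact absurd (hs.trans_le hst) ht | norm_num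
  have hbdd : ∀ y, |(Ioi x).indicator (fun _ => (1 : ℝ)) y| ≤ 1 := fun y => by
    by_cases hy : y ∈ Ioi x <;> simp [hy]
  have hI := h _ hmono ⟨1, hbdd⟩
  rwa [integral_indicator_const _ measurableSet_Ioi, integral_indicator_const _ measurableSet_Ioi,
    smul_eq_mul, smul_eq_mul, mul_one, mul_one, measureReal_def, measureReal_def,
    ENNReal.toReal_le_toReal (measure_ne_top _ _) (measure_ne_top _ _)] at hI

lemma StOrder.antisymm [IsProbabilityMeasure μ] [IsProbabilityMeasure ν] (h₁ : StOrder μ ν)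
    (h₂ : StOrder ν μ) : μ = ν :=
  Measure.eq_of_cdf μ ν (StieltjesFunction.ext fun x => le_antisymm (h₂.cdfLE x) (h₁.cdfLE x))

end CdfOrder

section Wasserstein

variable {μ ν a b : Measure ℝ}

def secondMoment (μ : Measure ℝ) : ℝ≥0∞ := ∫⁻ x, ENNReal.ofReal (x ^ 2) ∂μ

lemma mem_P2_iff : μ ∈ P2 ↔ IsProbabilityMeasure μ ∧ secondMoment μ ≠ ⊤ := by
  refine and_congr_right fun _ => ?_
  rw [secondMoment, ← lt_top_iff_ne_top, ← hasFiniteIntegral_iff_ofReal (.of_forall sq_nonneg)]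
  exact ⟨fun h => h.2, fun h => ⟨(measurable_id.pow_const 2).aestronglyMeasurable, h⟩⟩

lemma isProbabilityMeasure_of_mem_P2 (h : μ ∈ P2) : IsProbabilityMeasure μ := h.1

lemma secondMoment_ne_top_of_mem_P2 (h : μ ∈ P2) : secondMoment μ ≠ ⊤ := (mem_P2_iff.mp h).2

lemma secondMoment_eq_lintegral_quantile [IsProbabilityMeasure μ] :
    secondMoment μ = ∫⁻ u, ENNReal.ofReal (quantile μ u ^ 2) ∂unitVolume :=
  (lintegral_quantile (measurable_id.pow_const 2).ennreal_ofReal).symm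

lemma sq_le_sq_add_sq_of_mem_Icc {a b x : ℝ} (hx : x ∈ Icc a b) : x ^ 2 ≤ a ^ 2 + b ^ 2 := by
  rcases le_total 0 x with h | h <;> nlinarith [hx.1, hx.2]

lemma sq_sub_le_of_mem_Icc {a b x y : ℝ} (hx : x ∈ Icc a b) (hy : y ∈ Icc a b) :
    (x - y) ^ 2 ≤ 2 * a ^ 2 + 2 * b ^ 2 := by
  nlinarith [hx.1, hx.2, hy.1, hy.2, sq_nonneg (a + b)]

lemma secondMoment_le_of_cdfLE [IsProbabilityMeasure a] [IsProbabilityMeasure b]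
    [IsProbabilityMeasure μ] (ha : CdfLE a μ) (hb : CdfLE μ b) :
    secondMoment μ ≤ secondMoment a + secondMoment b := by
  simp only [secondMoment_eq_lintegral_quantile]
  rw [← lintegral_add_left (measurable_quantile.pow_const 2).ennreal_ofReal]
  refine lintegral_mono fun u => ?_
  rw [← ENNReal.ofReal_add (sq_nonneg _) (sq_nonneg _)]
  exact ENNReal.ofReal_le_ofReal
    (sq_le_sq_add_sq_of_mem_Icc ⟨ha.quantile_le u, hb.quantile_le u⟩)

def cost (π : Measure (ℝ × ℝ)) : ℝ≥0∞ := ∫⁻ q, ENNReal.ofReal ((q.1 - q.2) ^ 2) ∂π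

lemma measurable_sq_dist_ofReal :
    Measurable fun q : ℝ × ℝ => ENNReal.ofReal ((q.1 - q.2) ^ 2) :=
  ((measurable_fst.sub measurable_snd).pow_const 2).ennreal_ofReal

lemma W2_eq_iInf_cost : W2 μ ν =
    ⨅ (π : Measure (ℝ × ℝ)) (_ : π.map Prod.fst = μ) (_ : π.map Prod.snd = ν),
      cost π ^ (1 / 2 : ℝ) := by
  simp only [W2, Wp, cost, Real.rpow_two, sq_abs]

lemma W2_le_cost {π : Measure (ℝ × ℝ)} (h₁ : π.map Prod.fst = μ) (h₂ : π.map Prod.snd = ν) :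
    W2 μ ν ≤ cost π ^ (1 / 2 : ℝ) := by
  rw [W2_eq_iInf_cost]
  exact iInf₂_le_of_le π h₁ (iInf_le _ h₂)

lemma exists_cost_lt_of_W2_lt {c : ℝ≥0∞} (h : W2 μ ν < c) :
    ∃ π : Measure (ℝ × ℝ), π.map Prod.fst = μ ∧ π.map Prod.snd = ν ∧
      cost π ^ (1 / 2 : ℝ) < c := by
  simp only [W2_eq_iInf_cost, iInf_lt_iff] at h
  obtain ⟨π, h₁, h₂, hπ⟩ := h
  exact ⟨π, h₁, h₂, hπ⟩

lemma W2_comm : W2 μ ν = W2 ν μ := by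
  have key : ∀ α β : Measure ℝ, W2 α β ≤ W2 β α := fun α β => by
    rw [W2_eq_iInf_cost (μ := β)]
    refine le_iInf₂ fun π h₁ => le_iInf fun h₂ => ?_
    calc W2 α β ≤ cost (π.map Prod.swap) ^ (1 / 2 : ℝ) := W2_le_cost (μ := α) (ν := β)
          (by rwa [Measure.map_map measurable_fst measurable_swap])
          (by rwa [Measure.map_map measurable_snd measurable_swap])
      _ = cost π ^ (1 / 2 : ℝ) := by
          rw [cost, cost, lintegral_map measurable_sq_dist_ofReal measurable_swap]
          simp_rw [Prod.fst_swap, Prod.snd_swap, sub_sq_comm _ (Prod.fst _)]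
  exact le_antisymm (key μ ν) (key ν μ)

def quantileDist (μ ν : Measure ℝ) : ℝ≥0∞ :=
  (∫⁻ u, ENNReal.ofReal ((quantile μ u - quantile ν u) ^ 2) ∂unitVolume) ^ (1 / 2 : ℝ)

lemma W2_le_quantileDist [IsProbabilityMeasure μ] [IsProbabilityMeasure ν] :
    W2 μ ν ≤ quantileDist μ ν := by
  have hm : Measurable fun u => (quantile μ u, quantile ν u) :=
    measurable_quantile.prodMk measurable_quantile
  have h := W2_le_cost (μ := μ) (ν := ν) (π := unitVolume.map fun u => (quantile μ u, quantile ν u))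
    (by rw [Measure.map_map measurable_fst hm]; exact map_quantile)
    (by rw [Measure.map_map measurable_snd hm]; exact map_quantile)
  rwa [cost, lintegral_map measurable_sq_dist_ofReal hm] at h

lemma W2_self [IsProbabilityMeasure μ] : W2 μ μ = 0 :=
  nonpos_iff_eq_zero.mp <| W2_le_quantileDist.trans_eq <| by simp [quantileDist]

lemma W2_dirac_zero_le [IsProbabilityMeasure μ] :
    W2 μ (Measure.dirac 0) ≤ secondMoment μ ^ (1 / 2 : ℝ) := by
  have hm : Measurable fun x : ℝ => (x, (0 : ℝ)) := measurable_id.prodMk measurable_const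
  have h := W2_le_cost (μ := μ) (ν := Measure.dirac 0) (π := μ.map fun x => (x, (0 : ℝ)))
    (by rw [Measure.map_map measurable_fst hm]; exact Measure.map_id)
    (by rw [Measure.map_map measurable_snd hm]; simp [Function.comp_def])
  simpa [cost, lintegral_map measurable_sq_dist_ofReal hm, secondMoment] using h

lemma boundedSet_of_secondMoment_le {B : Set (Measure ℝ)} {C : ℝ≥0∞} (hC : C ≠ ⊤)
    (hB : ∀ μ ∈ B, IsProbabilityMeasure μ ∧ secondMoment μ ≤ C) : BoundedSet B := by
  refine ⟨C ^ (1 / 2 : ℝ), ENNReal.rpow_lt_top_of_nonneg (by norm_num) hC, fun μ hμ => ?_⟩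
  have := (hB μ hμ).1
  exact W2_dirac_zero_le.trans (ENNReal.rpow_le_rpow (hB μ hμ).2 (by norm_num))

end Wasserstein

section Triangle

variable {μ ν ρ : Measure ℝ}

/-- Gluing along the common marginal: given the middle coordinate `p.1`, the two outer
coordinates are drawn independently from the disintegrations of `π₁` and `π₂`. -/
lemma exists_glued_coupling (π₁ π₂ : Measure (ℝ × ℝ)) [IsFiniteMeasure π₁] [IsFiniteMeasure π₂]
    (h : π₁.map Prod.snd = π₂.map Prod.fst) :
    ∃ m : Measure (ℝ × ℝ × ℝ), m.map (fun p => (p.2.1, p.1)) = π₁ ∧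
      m.map (fun p => (p.1, p.2.2)) = π₂ := by
  set σ := π₁.map Prod.swap
  have hσ : σ.fst = π₂.fst := by
    rw [Measure.fst, Measure.map_map measurable_fst measurable_swap]; exact h
  set m := π₂.fst ⊗ₘ (σ.condKernel ×ₖ π₂.condKernel)
  have hleft : m.map (fun p => (p.1, p.2.1)) = σ := by
    rw [show (fun p : ℝ × ℝ × ℝ => (p.1, p.2.1)) = Prod.map id Prod.fst from rfl,
      ← Measure.compProd_map measurable_fst]
    conv_rhs => rw [← σ.disintegrate σ.condKernel, hσ]
    rw [← Kernel.fst_eq, Kernel.fst_prod]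
  refine ⟨m, ?_, ?_⟩
  · rw [show (fun p : ℝ × ℝ × ℝ => (p.2.1, p.1)) = Prod.swap ∘ fun p => (p.1, p.2.1) from rfl,
      ← Measure.map_map measurable_swap (by fun_prop), hleft, Measure.map_map measurable_swap
      measurable_swap, Prod.swap_swap_eq, Measure.map_id]
  · rw [show (fun p : ℝ × ℝ × ℝ => (p.1, p.2.2)) = Prod.map id Prod.snd from rfl,
      ← Measure.compProd_map measurable_snd]
    conv_rhs => rw [← π₂.disintegrate π₂.condKernel]
    rw [← Kernel.snd_eq, Kernel.snd_prod]

lemma isProbabilityMeasure_of_map_eq {α β : Type*} [MeasurableSpace α] [MeasurableSpace β]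
    {π : Measure α} {f : α → β} {μ : Measure β} [IsProbabilityMeasure μ] (h : π.map f = μ) :
    IsProbabilityMeasure π :=
  have : IsProbabilityMeasure (π.map f) := h ▸ ‹_›
  Measure.isProbabilityMeasure_of_map f

lemma ofReal_sq_sub_eq_rpow (s t : ℝ) :
    ENNReal.ofReal ((s - t) ^ 2) = ENNReal.ofReal |s - t| ^ (2 : ℝ) := by
  rw [ENNReal.ofReal_rpow_of_nonneg (abs_nonneg _) zero_le_two, Real.rpow_two, sq_abs]

lemma lintegral_sq_sub_rpow_half_le {Ω : Type*} [MeasurableSpace Ω] (m : Measure Ω) {X Y Z : Ω → ℝ}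
    (hX : Measurable X) (hY : Measurable Y) (hZ : Measurable Z) :
    (∫⁻ ω, ENNReal.ofReal ((X ω - Z ω) ^ 2) ∂m) ^ (1 / 2 : ℝ) ≤
      (∫⁻ ω, ENNReal.ofReal ((X ω - Y ω) ^ 2) ∂m) ^ (1 / 2 : ℝ) +
        (∫⁻ ω, ENNReal.ofReal ((Y ω - Z ω) ^ 2) ∂m) ^ (1 / 2 : ℝ) := by
  simp only [ofReal_sq_sub_eq_rpow]
  calc (∫⁻ ω, ENNReal.ofReal |X ω - Z ω| ^ (2 : ℝ) ∂m) ^ (1 / 2 : ℝ)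
      ≤ (∫⁻ ω, (ENNReal.ofReal |X ω - Y ω| + ENNReal.ofReal |Y ω - Z ω|) ^ (2 : ℝ) ∂m) ^
          (1 / 2 : ℝ) := by
        gcongr with ω
        rw [← ENNReal.ofReal_add (abs_nonneg _) (abs_nonneg _)]
        exact ENNReal.ofReal_le_ofReal (abs_sub_le _ _ _)
    _ ≤ _ := ENNReal.lintegral_Lp_add_le (by fun_prop) (by fun_prop) one_le_two

lemma W2_le_cost_add_cost {π₁ π₂ : Measure (ℝ × ℝ)} [IsFiniteMeasure π₁] [IsFiniteMeasure π₂]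
    (h1f : π₁.map Prod.fst = μ) (h1s : π₁.map Prod.snd = ν) (h2f : π₂.map Prod.fst = ν)
    (h2s : π₂.map Prod.snd = ρ) : W2 μ ρ ≤ cost π₁ ^ (1 / 2 : ℝ) + cost π₂ ^ (1 / 2 : ℝ) := by
  obtain ⟨m, hm₁, hm₂⟩ := exists_glued_coupling π₁ π₂ (h1s.trans h2f.symm)
  have hcost₁ : cost π₁ = ∫⁻ p, ENNReal.ofReal ((p.2.1 - p.1) ^ 2) ∂m := by
    rw [← hm₁, cost, lintegral_map measurable_sq_dist_ofReal (by fun_prop)]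
  have hcost₂ : cost π₂ = ∫⁻ p, ENNReal.ofReal ((p.1 - p.2.2) ^ 2) ∂m := by
    rw [← hm₂, cost, lintegral_map measurable_sq_dist_ofReal (by fun_prop)]
  have hfst : (m.map fun p => (p.2.1, p.2.2)).map Prod.fst = μ := by
    rw [Measure.map_map measurable_fst (by fun_prop), ← h1f, ← hm₁,
      Measure.map_map measurable_fst (by fun_prop)]
    rfl
  have hsnd : (m.map fun p => (p.2.1, p.2.2)).map Prod.snd = ρ := by
    rw [Measure.map_map measurable_snd (by fun_prop), ← h2s, ← hm₂,
      Measure.map_map measurable_snd (by fun_prop)]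
    rfl
  calc W2 μ ρ ≤ cost (m.map fun p => (p.2.1, p.2.2)) ^ (1 / 2 : ℝ) := W2_le_cost hfst hsnd
    _ = (∫⁻ p, ENNReal.ofReal ((p.2.1 - p.2.2) ^ 2) ∂m) ^ (1 / 2 : ℝ) := by
        rw [cost, lintegral_map measurable_sq_dist_ofReal (by fun_prop)]
    _ ≤ cost π₁ ^ (1 / 2 : ℝ) + cost π₂ ^ (1 / 2 : ℝ) := by
        rw [hcost₁, hcost₂]
        exact lintegral_sq_sub_rpow_half_le m (by fun_prop) measurable_fst (by fun_prop)

lemma W2_triangle [IsProbabilityMeasure μ] : W2 μ ρ ≤ W2 μ ν + W2 ν ρ := by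
  rcases eq_or_ne (W2 μ ν) ⊤ with h₁ | h₁
  · simp [h₁]
  rcases eq_or_ne (W2 ν ρ) ⊤ with h₂ | h₂
  · simp [h₂]
  refine ENNReal.le_of_forall_pos_le_add fun ε hε _ => ?_
  have hε2 : (ε : ℝ≥0∞) / 2 ≠ 0 := (ENNReal.half_pos (by exact_mod_cast hε.ne')).ne'
  obtain ⟨π₁, h1f, h1s, hc₁⟩ := exists_cost_lt_of_W2_lt (ENNReal.lt_add_right h₁ hε2)
  obtain ⟨π₂, h2f, h2s, hc₂⟩ := exists_cost_lt_of_W2_lt (ENNReal.lt_add_right h₂ hε2)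
  have := isProbabilityMeasure_of_map_eq h1f
  have : IsProbabilityMeasure ν := h1s ▸ Measure.isProbabilityMeasure_map (by fun_prop)
  have := isProbabilityMeasure_of_map_eq h2f
  calc W2 μ ρ ≤ cost π₁ ^ (1 / 2 : ℝ) + cost π₂ ^ (1 / 2 : ℝ) :=
        W2_le_cost_add_cost h1f h1s h2f h2s
    _ ≤ (W2 μ ν + ε / 2) + (W2 ν ρ + ε / 2) := add_le_add hc₁.le hc₂.le
    _ = W2 μ ν + W2 ν ρ + ε := by rw [add_add_add_comm, ENNReal.add_halves]

end Triangle

section Convergence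

variable {μ ν : Measure ℝ}

lemma lintegral_le_sqrt_lintegral_sq {Ω : Type*} [MeasurableSpace Ω] (m : Measure Ω)
    [IsProbabilityMeasure m] {f : Ω → ℝ≥0∞} (hf : AEMeasurable f m) :
    ∫⁻ ω, f ω ∂m ≤ (∫⁻ ω, f ω ^ (2 : ℝ) ∂m) ^ (1 / 2 : ℝ) := by
  simpa using ENNReal.lintegral_mul_le_Lp_mul_Lq m Real.HolderConjugate.two_two hf
    (aemeasurable_const (b := (1 : ℝ≥0∞)))

lemma ofReal_abs_integral_sub_le_cost [IsProbabilityMeasure ν] {g : ℝ → ℝ} {L : ℝ≥0} {C : ℝ}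
    (hg : LipschitzWith L g) (hC : ∀ x, |g x| ≤ C) {π : Measure (ℝ × ℝ)}
    (h₁ : π.map Prod.fst = μ) (h₂ : π.map Prod.snd = ν) :
    ENNReal.ofReal |∫ x, g x ∂μ - ∫ x, g x ∂ν| ≤ L * cost π ^ (1 / 2 : ℝ) := by
  have := isProbabilityMeasure_of_map_eq h₂
  have hgm := hg.continuous.measurable
  have hint : ∀ f : ℝ × ℝ → ℝ, Measurable f → Integrable (fun q => g (f q)) π := fun f hf =>
    .of_bound (hgm.comp hf).aestronglyMeasurable C (.of_forall fun _ => hC _)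
  rw [← h₁, ← h₂, integral_map (by fun_prop) hgm.aestronglyMeasurable,
    integral_map (by fun_prop) hgm.aestronglyMeasurable,
    ← integral_sub (hint _ measurable_fst) (hint _ measurable_snd), ← Real.enorm_eq_ofReal_abs]
  calc ‖∫ q, (g q.1 - g q.2) ∂π‖ₑ ≤ ∫⁻ q, ‖g q.1 - g q.2‖ₑ ∂π :=
        enorm_integral_le_lintegral_enorm _
    _ ≤ ∫⁻ q, L * ENNReal.ofReal |q.1 - q.2| ∂π := by
        gcongr with q
        simpa [edist_dist, Real.dist_eq, Real.enorm_eq_ofReal_abs] using hg.edist_le_mul q.1 q.2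
    _ = L * ∫⁻ q, ENNReal.ofReal |q.1 - q.2| ∂π := lintegral_const_mul _ (by fun_prop)
    _ ≤ L * cost π ^ (1 / 2 : ℝ) := by
        gcongr
        simpa only [cost, ofReal_sq_sub_eq_rpow] using
          lintegral_le_sqrt_lintegral_sq π (by fun_prop)

lemma ofReal_abs_integral_sub_le_W2 [IsProbabilityMeasure ν] {g : ℝ → ℝ} {L : ℝ≥0} {C : ℝ}
    (hg : LipschitzWith L g) (hC : ∀ x, |g x| ≤ C) (hL : L ≠ 0) :
    ENNReal.ofReal |∫ x, g x ∂μ - ∫ x, g x ∂ν| ≤ L * W2 μ ν := by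
  rcases eq_or_ne (W2 μ ν) ⊤ with htop | hfin
  · simp [htop, ENNReal.mul_top, hL]
  refine ENNReal.le_of_forall_pos_le_add fun ε hε _ => ?_
  have hLtop : (L : ℝ≥0∞) ≠ ⊤ := ENNReal.coe_ne_top
  have hδ : (ε : ℝ≥0∞) / L ≠ 0 := by simpa [hLtop] using hε.ne'
  obtain ⟨π, h₁, h₂, hπ⟩ := exists_cost_lt_of_W2_lt (ENNReal.lt_add_right hfin hδ)
  calc ENNReal.ofReal |∫ x, g x ∂μ - ∫ x, g x ∂ν| ≤ L * cost π ^ (1 / 2 : ℝ) :=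
        ofReal_abs_integral_sub_le_cost hg hC h₁ h₂
    _ ≤ L * (W2 μ ν + ε / L) := by gcongr
    _ = L * W2 μ ν + ε := by rw [mul_add, ENNReal.mul_div_cancel (by simpa using hL) hLtop]

lemma tendsto_integral_of_W2Tendsto [IsProbabilityMeasure ν] {μs : ℕ → Measure ℝ}
    (hconv : W2Tendsto μs ν) {g : ℝ → ℝ} {L : ℝ≥0} {C : ℝ} (hg : LipschitzWith L g)
    (hC : ∀ x, |g x| ≤ C) :
    Tendsto (fun n => ∫ x, g x ∂μs n) atTop (nhds (∫ x, g x ∂ν)) := by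
  have hbound : Tendsto (fun n => ((L + 1 : ℝ≥0) : ℝ≥0∞) * W2 (μs n) ν) atTop (nhds 0) := by
    simpa using ENNReal.Tendsto.const_mul (a := ((L + 1 : ℝ≥0) : ℝ≥0∞)) hconv
      (Or.inr ENNReal.coe_ne_top)
  have h₀ := tendsto_of_tendsto_of_tendsto_of_le_of_le tendsto_const_nhds hbound
    (fun _ => zero_le) fun n => ofReal_abs_integral_sub_le_W2 (μ := μs n)
      (hg.weaken le_self_add) hC (by positivity)
  rw [tendsto_iff_norm_sub_tendsto_zero]
  simpa [Function.comp_def, Real.norm_eq_abs] using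
    (ENNReal.tendsto_toReal ENNReal.zero_ne_top).comp h₀

end Convergence

def ramp (c δ : ℝ) (x : ℝ) : ℝ := projIcc 0 1 zero_le_one ((x - c) / δ)

section Ramp

variable {μ : Measure ℝ} {c δ : ℝ}

lemma ramp_mem_Icc (x : ℝ) : ramp c δ x ∈ Icc (0 : ℝ) 1 := Subtype.prop _

lemma abs_ramp_le (x : ℝ) : |ramp c δ x| ≤ 1 :=
  abs_le.mpr ⟨by linarith [(ramp_mem_Icc (c := c) (δ := δ) x).1], (ramp_mem_Icc x).2⟩

lemma monotone_ramp (hδ : 0 < δ) : Monotone (ramp c δ) := fun x y hxy =>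
  Subtype.mono_coe _ (monotone_projIcc _ (by gcongr))

lemma lipschitzWith_ramp (hδ : 0 < δ) : LipschitzWith (Real.toNNReal δ⁻¹) (ramp c δ) := by
  refine LipschitzWith.of_dist_le_mul fun x y => ?_
  calc dist (ramp c δ x) (ramp c δ y) ≤ dist ((x - c) / δ) ((y - c) / δ) := by
        rw [ramp, ramp, ← Subtype.dist_eq]
        simpa using (LipschitzWith.projIcc zero_le_one).dist_le_mul ((x - c) / δ) ((y - c) / δ)
    _ = _ := by
        rw [Real.dist_eq, Real.dist_eq, ← sub_div, sub_sub_sub_cancel_right, abs_div,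
          abs_of_pos hδ, Real.coe_toNNReal _ (inv_nonneg.mpr hδ.le), div_eq_inv_mul]

lemma indicator_Ioi_le_ramp (hδ : 0 < δ) :
    (Ioi (c + δ)).indicator (fun _ => (1 : ℝ)) ≤ ramp c δ := fun x => by
  by_cases hx : x ∈ Ioi (c + δ)
  · rw [indicator_of_mem hx, ramp, projIcc_of_right_le]
    rw [le_div_iff₀ hδ]; linarith [mem_Ioi.mp hx]
  · rw [indicator_of_notMem hx]; exact (ramp_mem_Icc x).1

lemma ramp_le_indicator_Ioi (hδ : 0 < δ) :
    ramp c δ ≤ (Ioi c).indicator (fun _ => (1 : ℝ)) := fun x => by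
  by_cases hx : x ∈ Ioi c
  · rw [indicator_of_mem hx]; exact (ramp_mem_Icc x).2
  · rw [indicator_of_notMem hx, ramp, projIcc_of_le_left]
    rw [mem_Ioi, not_lt] at hx
    exact div_nonpos_of_nonpos_of_nonneg (by linarith) hδ.le

lemma integrable_ramp [IsFiniteMeasure μ] (hδ : 0 < δ) : Integrable (ramp c δ) μ :=
  .of_bound (lipschitzWith_ramp hδ).continuous.aestronglyMeasurable 1 (.of_forall abs_ramp_le)

lemma measureReal_Ioi_add_le_integral_ramp [IsFiniteMeasure μ] (hδ : 0 < δ) :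
    μ.real (Ioi (c + δ)) ≤ ∫ x, ramp c δ x ∂μ := by
  simpa [integral_indicator_const _ measurableSet_Ioi] using integral_mono
    ((integrable_const (1 : ℝ)).indicator measurableSet_Ioi) (integrable_ramp hδ)
    (indicator_Ioi_le_ramp hδ)

lemma integral_ramp_le_measureReal_Ioi [IsFiniteMeasure μ] (hδ : 0 < δ) :
    ∫ x, ramp c δ x ∂μ ≤ μ.real (Ioi c) := by
  simpa [integral_indicator_const _ measurableSet_Ioi] using integral_mono
    (integrable_ramp hδ) ((integrable_const (1 : ℝ)).indicator measurableSet_Ioi)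
    (ramp_le_indicator_Ioi hδ)

end Ramp

section OrderClosed

variable {μ ν ρ : Measure ℝ} {μs : ℕ → Measure ℝ}

lemma cdfLE_of_forall_integral_ramp_le [IsProbabilityMeasure μ] [IsProbabilityMeasure ν]
    (h : ∀ x δ, 0 < δ → ∫ y, ramp x δ y ∂μ ≤ ∫ y, ramp x δ y ∂ν) : CdfLE μ ν := fun x => by
  refine (cdf μ).le_apply_of_forall_lt fun y hy => ?_
  have hμν : μ.real (Ioi y) ≤ ν.real (Ioi x) := by
    simpa using (measureReal_Ioi_add_le_integral_ramp (sub_pos.mpr hy)).trans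
      ((h x _ (sub_pos.mpr hy)).trans (integral_ramp_le_measureReal_Ioi (sub_pos.mpr hy)))
  rw [cdf_eq_real, cdf_eq_real, ← compl_Ioi, ← compl_Ioi,
    probReal_compl_eq_one_sub measurableSet_Ioi, probReal_compl_eq_one_sub measurableSet_Ioi]
  linarith

lemma StOrder.integral_ramp_le (h : StOrder μ ν) {x δ : ℝ} (hδ : 0 < δ) :
    ∫ y, ramp x δ y ∂μ ≤ ∫ y, ramp x δ y ∂ν :=
  h _ (monotone_ramp hδ) ⟨1, abs_ramp_le⟩

lemma W2Tendsto.tendsto_integral_ramp [IsProbabilityMeasure ν] (h : W2Tendsto μs ν) {x δ : ℝ}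
    (hδ : 0 < δ) : Tendsto (fun n => ∫ y, ramp x δ y ∂μs n) atTop (nhds (∫ y, ramp x δ y ∂ν)) :=
  tendsto_integral_of_W2Tendsto h (lipschitzWith_ramp hδ) abs_ramp_le

lemma W2Tendsto.stOrder_right [IsProbabilityMeasure ν] [IsProbabilityMeasure ρ]
    (hconv : W2Tendsto μs ν) (h : ∀ n, StOrder ρ (μs n)) : StOrder ρ ν :=
  stOrder_of_cdfLE <| cdfLE_of_forall_integral_ramp_le fun _ _ hδ =>
    ge_of_tendsto' (hconv.tendsto_integral_ramp hδ) fun n => (h n).integral_ramp_le hδ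

lemma W2Tendsto.stOrder_left [IsProbabilityMeasure ν] [IsProbabilityMeasure ρ]
    (hconv : W2Tendsto μs ν) (h : ∀ n, StOrder (μs n) ρ) : StOrder ν ρ :=
  stOrder_of_cdfLE <| cdfLE_of_forall_integral_ramp_le fun _ _ hδ =>
    le_of_tendsto' (hconv.tendsto_integral_ramp hδ) fun n => (h n).integral_ramp_le hδ

lemma W2Tendsto.unique [IsProbabilityMeasure ν] [IsProbabilityMeasure ρ] (hν : W2Tendsto μs ν)
    (hρ : W2Tendsto μs ρ) : ν = ρ := by
  have h : ∀ x δ, 0 < δ → ∫ y, ramp x δ y ∂ν = ∫ y, ramp x δ y ∂ρ := fun _ _ hδ =>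
    tendsto_nhds_unique (hν.tendsto_integral_ramp hδ) (hρ.tendsto_integral_ramp hδ)
  exact StOrder.antisymm
    (stOrder_of_cdfLE (cdfLE_of_forall_integral_ramp_le fun x δ hδ => (h x δ hδ).le))
    (stOrder_of_cdfLE (cdfLE_of_forall_integral_ramp_le fun x δ hδ => (h x δ hδ).ge))

end OrderClosed

section Helly

variable {a b ν : Measure ℝ} {ρs : ℕ → Measure ℝ}

lemma exists_subseq_tendsto_cdf_rat (ρs : ℕ → Measure ℝ) :
    ∃ (φ : ℕ → ℕ) (H : ℚ → ℝ), StrictMono φ ∧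
      ∀ q : ℚ, Tendsto (fun n => cdf (ρs (φ n)) q) atTop (nhds (H q)) := by
  obtain ⟨H, -, φ, hφ, hH⟩ := (isCompact_univ (X := ℚ → Icc (0 : ℝ) 1)).isSeqCompact
    (x := fun n q => ⟨cdf (ρs n) q, cdf_nonneg _ _, cdf_le_one _ _⟩) fun _ => mem_univ _
  exact ⟨φ, fun q => H q, hφ, fun q =>
    (continuous_subtype_val.tendsto _).comp (tendsto_pi_nhds.mp hH q)⟩

/-- The measure has cdf `x ↦ inf_{q > x} H q`, the right-continuous regularization of `H`. -/
lemma exists_cdf_eq_iInf_rat_gt [IsProbabilityMeasure a] [IsProbabilityMeasure b] {H : ℚ → ℝ}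
    (ha : ∀ q : ℚ, H q ≤ cdf a q) (hb : ∀ q : ℚ, cdf b q ≤ H q) :
    ∃ ν : Measure ℝ, IsProbabilityMeasure ν ∧ CdfLE a ν ∧ CdfLE ν b ∧
      (∀ (x : ℝ) (q : ℚ), x < q → cdf ν x ≤ H q) ∧
      ∀ x u : ℝ, cdf ν x < u → ∃ q : ℚ, x < q ∧ H q < u := by
  set S : ℝ → Set ℝ := fun x => H '' {q : ℚ | x < q}
  have hSne : ∀ x, (S x).Nonempty := fun x =>
    let ⟨q, hq, _⟩ := exists_rat_btwn (lt_add_one x); ⟨H q, q, hq, rfl⟩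
  have hSbdd : ∀ x, BddBelow (S x) := fun x =>
    ⟨0, by rintro _ ⟨q, -, rfl⟩; exact (cdf_nonneg b q).trans (hb q)⟩
  set G : ℝ → ℝ := fun x => sInf (S x)
  have hG_le : ∀ (x : ℝ) (q : ℚ), x < q → G x ≤ H q := fun x q h => csInf_le (hSbdd x) ⟨q, h, rfl⟩
  have hG_mono : Monotone G := fun x y hxy =>
    csInf_le_csInf (hSbdd x) (hSne y) (image_mono fun q hq => hxy.trans_lt hq)
  have hbG : ∀ x, cdf b x ≤ G x := fun x =>
    le_csInf (hSne x) (by rintro _ ⟨q, hq, rfl⟩; exact ((cdf b).mono (le_of_lt hq)).trans (hb q))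
  have hGa : ∀ x, G x ≤ cdf a x := fun x => (cdf a).le_apply_of_forall_lt fun y hy =>
    let ⟨q, h₁, h₂⟩ := exists_rat_btwn hy
    (hG_le x q h₁).trans ((ha q).trans ((cdf a).mono h₂.le))
  have hG_lt : ∀ x u, G x < u → ∃ q : ℚ, x < q ∧ H q < u := fun x u h => by
    obtain ⟨_, ⟨q, hq, rfl⟩, hlt⟩ := exists_lt_of_csInf_lt (hSne x) h
    exact ⟨q, hq, hlt⟩
  have hG_right : ∀ x, ContinuousWithinAt G (Ici x) x := fun x => by
    refine Metric.continuousWithinAt_iff.mpr fun ε hε => ?_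
    obtain ⟨q, hxq, hq⟩ := hG_lt x (G x + ε) (by linarith)
    refine ⟨q - x, sub_pos.mpr hxq, fun {y} hy hyd => ?_⟩
    have hyq : y < q := by rw [Real.dist_eq, abs_lt] at hyd; linarith
    rw [Real.dist_eq, abs_lt]
    constructor <;> linarith [hG_le y q hyq, hG_mono (mem_Ici.mp hy)]
  let Gs : StieltjesFunction ℝ := ⟨G, hG_mono, hG_right⟩
  have hbot : Tendsto G atBot (nhds 0) := tendsto_of_tendsto_of_tendsto_of_le_of_le
    tendsto_const_nhds (tendsto_cdf_atBot a) (fun x => (cdf_nonneg b x).trans (hbG x)) hGa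
  have htop : Tendsto G atTop (nhds 1) := tendsto_of_tendsto_of_tendsto_of_le_of_le
    (tendsto_cdf_atTop b) tendsto_const_nhds hbG fun x => (hGa x).trans (cdf_le_one a x)
  have hcdf : cdf Gs.measure = Gs := cdf_measure_stieltjesFunction Gs hbot htop
  refine ⟨Gs.measure, ⟨by simp [Gs.measure_univ hbot htop]⟩, ?_⟩
  simp only [CdfLE, hcdf]
  exact ⟨hGa, hbG, hG_le, hG_lt⟩

lemma tendsto_quantile_of_tendsto_cdf_rat [∀ n, IsProbabilityMeasure (ρs n)]
    [IsProbabilityMeasure ν] {H : ℚ → ℝ}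
    (hH : ∀ q : ℚ, Tendsto (fun n => cdf (ρs n) q) atTop (nhds (H q)))
    (hle : ∀ (x : ℝ) (q : ℚ), x < q → cdf ν x ≤ H q)
    (hlt : ∀ x u : ℝ, cdf ν x < u → ∃ q : ℚ, x < q ∧ H q < u) {u : ℝ} (hu : u ∈ Ioo (0 : ℝ) 1)
    (hcont : ContinuousWithinAt (quantile ν) (Ioo 0 1 ∩ Ioi u) u) :
    Tendsto (fun n => quantile (ρs n) u) atTop (nhds (quantile ν u)) := by
  refine tendsto_order.mpr ⟨fun y hy => ?_, fun y hy => ?_⟩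
  · obtain ⟨y', hyy', hy'⟩ := exists_between hy
    obtain ⟨q, hyq, hq⟩ := hlt y' u ((lt_quantile_iff hu).mp hy')
    filter_upwards [(hH q).eventually (eventually_lt_nhds hq)] with n hn
    exact (lt_quantile_iff hu).mpr (((cdf _).mono (hyy'.trans hyq).le).trans_lt hn)
  · rw [Ioo_inter_Ioi, max_eq_right hu.1.le] at hcont
    have := left_nhdsWithin_Ioo_neBot hu.2
    obtain ⟨v, hvy, huv, hv1⟩ :=
      ((hcont.eventually (eventually_lt_nhds hy)).and self_mem_nhdsWithin).exists
    have hv01 : v ∈ Ioo (0 : ℝ) 1 := ⟨hu.1.trans huv, hv1⟩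
    obtain ⟨q, hvq, hqy⟩ := exists_rat_btwn hvy
    have hvH : v ≤ H q := ((quantile_le_iff hv01).mp le_rfl).trans (hle _ q hvq)
    filter_upwards [(hH q).eventually (eventually_gt_nhds (huv.trans_le hvH))] with n hn
    exact ((quantile_le_iff hu).mpr hn.le).trans_lt hqy

lemma tendsto_quantileDist_of_ae_tendsto [IsProbabilityMeasure a] [IsProbabilityMeasure b]
    [∀ n, IsProbabilityMeasure (ρs n)] [IsProbabilityMeasure ν]
    (h2a : secondMoment a ≠ ⊤) (h2b : secondMoment b ≠ ⊤)
    (ha : ∀ n, CdfLE a (ρs n)) (hb : ∀ n, CdfLE (ρs n) b) (haν : CdfLE a ν) (hνb : CdfLE ν b)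
    (hae : ∀ᵐ u ∂unitVolume, Tendsto (fun n => quantile (ρs n) u) atTop (nhds (quantile ν u))) :
    Tendsto (fun n => quantileDist (ρs n) ν) atTop (nhds 0) := by
  set bound : ℝ → ℝ≥0∞ := fun u =>
    2 * ENNReal.ofReal (quantile a u ^ 2) + 2 * ENNReal.ofReal (quantile b u ^ 2)
  have hbound (n : ℕ) (u : ℝ) :
      ENNReal.ofReal ((quantile (ρs n) u - quantile ν u) ^ 2) ≤ bound u := by
    simp only [bound]
    rw [← ENNReal.ofReal_ofNat 2, ← ENNReal.ofReal_mul zero_le_two,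
      ← ENNReal.ofReal_mul zero_le_two, ← ENNReal.ofReal_add (by positivity) (by positivity)]
    exact ENNReal.ofReal_le_ofReal <| sq_sub_le_of_mem_Icc
      ⟨(ha n).quantile_le u, (hb n).quantile_le u⟩ ⟨haν.quantile_le u, hνb.quantile_le u⟩
  have hbound_int : ∫⁻ u, bound u ∂unitVolume ≠ ⊤ := by
    rw [lintegral_add_left (by fun_prop), lintegral_const_mul _ (by fun_prop),
      lintegral_const_mul _ (by fun_prop), ← secondMoment_eq_lintegral_quantile,
      ← secondMoment_eq_lintegral_quantile]
    finiteness
  have hlim := tendsto_lintegral_of_dominated_convergence bound (fun n => by fun_prop)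
    (fun n => .of_forall (hbound n)) hbound_int <| hae.mono fun u hu => by
      simpa using ENNReal.tendsto_ofReal ((hu.sub_const (quantile ν u)).pow 2)
  rw [lintegral_zero] at hlim
  simpa [quantileDist, Function.comp_def] using
    ((ENNReal.continuous_rpow_const (y := 1 / 2)).tendsto 0).comp hlim

theorem exists_subseq_W2Tendsto_of_stOrder (ha : a ∈ P2) (hb : b ∈ P2)
    [∀ n, IsProbabilityMeasure (ρs n)] (h : ∀ n, StOrder a (ρs n) ∧ StOrder (ρs n) b) :
    ∃ (φ : ℕ → ℕ) (ν : Measure ℝ), StrictMono φ ∧ ν ∈ P2 ∧ W2Tendsto (fun n => ρs (φ n)) ν := by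
  have := isProbabilityMeasure_of_mem_P2 ha
  have := isProbabilityMeasure_of_mem_P2 hb
  have hab : ∀ n, CdfLE a (ρs n) ∧ CdfLE (ρs n) b := fun n => ⟨(h n).1.cdfLE, (h n).2.cdfLE⟩
  obtain ⟨φ, H, hφ, hH⟩ := exists_subseq_tendsto_cdf_rat ρs
  obtain ⟨ν, hν, haν, hνb, hle, hlt⟩ := exists_cdf_eq_iInf_rat_gt (H := H)
    (fun q => le_of_tendsto' (hH q) fun n => (hab (φ n)).1 q)
    (fun q => ge_of_tendsto' (hH q) fun n => (hab (φ n)).2 q)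
  have hae : ∀ᵐ u ∂unitVolume,
      Tendsto (fun n => quantile (ρs (φ n)) u) atTop (nhds (quantile ν u)) := by
    have hjumps := (monotoneOn_quantile (μ := ν)).countable_not_continuousWithinAt_Ioi
    filter_upwards [ae_restrict_mem measurableSet_Ioo, ae_restrict_of_ae (hjumps.ae_notMem volume)]
      with u hu hcont
    exact tendsto_quantile_of_tendsto_cdf_rat hH hle hlt hu (not_not.mp fun h => hcont ⟨hu, h⟩)
  refine ⟨φ, ν, hφ, mem_P2_iff.mpr ⟨hν, ?_⟩, ?_⟩
  · exact ne_top_of_le_ne_top (ENNReal.add_ne_top.mpr ⟨secondMoment_ne_top_of_mem_P2 ha,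
      secondMoment_ne_top_of_mem_P2 hb⟩) (secondMoment_le_of_cdfLE haν hνb)
  · exact tendsto_of_tendsto_of_tendsto_of_le_of_le tendsto_const_nhds
      (tendsto_quantileDist_of_ae_tendsto (secondMoment_ne_top_of_mem_P2 ha)
        (secondMoment_ne_top_of_mem_P2 hb) (fun n => (hab (φ n)).1) (fun n => (hab (φ n)).2)
        haν hνb hae) (fun _ => zero_le) fun _ => W2_le_quantileDist

end Helly

lemma exists_tendsto_of_tendsto_iInf {α : Type*} {K : Set α} {g : ℕ → α → ℝ≥0∞}
    (h : Tendsto (fun n => ⨅ ν ∈ K, g n ν) atTop (nhds 0)) :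
    ∃ κ : ℕ → α, (∀ n, κ n ∈ K) ∧ Tendsto (fun n => g n (κ n)) atTop (nhds 0) := by
  have hfin : ∀ᶠ n in atTop, ⨅ ν ∈ K, g n ν < ⊤ :=
    h.eventually (gt_mem_nhds ENNReal.zero_lt_top)
  obtain ⟨ν₀, hν₀⟩ : K.Nonempty := by
    obtain ⟨n, hn⟩ := hfin.exists
    by_contra hK
    simp [not_nonempty_iff_eq_empty.mp hK] at hn
  have hchoice (n : ℕ) :
      ∃ ν ∈ K, ⨅ ν ∈ K, g n ν < ⊤ → g n ν < (⨅ ν ∈ K, g n ν) + (n : ℝ≥0∞)⁻¹ := by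
    by_cases hn : ⨅ ν ∈ K, g n ν < ⊤
    · obtain ⟨ν, hlt⟩ := iInf_lt_iff.mp
        (ENNReal.lt_add_right hn.ne (ENNReal.inv_ne_zero.mpr (ENNReal.natCast_ne_top n)))
      obtain ⟨hν, hlt⟩ := iInf_lt_iff.mp hlt
      exact ⟨ν, hν, fun _ => hlt⟩
    · exact ⟨ν₀, hν₀, fun h => absurd h hn⟩
  choose κ hκK hκ using hchoice
  refine ⟨κ, hκK, tendsto_of_tendsto_of_tendsto_of_le_of_le' tendsto_const_nhds
    (by simpa using h.add ENNReal.tendsto_inv_nat_nhds_zero) (.of_forall fun _ => zero_le) ?_⟩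
  filter_upwards [hfin] with n hn using (hκ n hn).le

section Dynamics

variable {P : ℝ → Measure ℝ → Measure ℝ} {K A B : Set (Measure ℝ)}

lemma Semiflow.mapsTo (hP : Semiflow P) {t : ℝ} (ht : 0 ≤ t) {μ : Measure ℝ} (hμ : μ ∈ P2) :
    P t μ ∈ P2 := hP.1 t ht μ hμ

lemma Semiflow.zero (hP : Semiflow P) {μ : Measure ℝ} (hμ : μ ∈ P2) : P 0 μ = μ := hP.2.1 μ hμ

lemma Semiflow.map_map (hP : Semiflow P) {t s : ℝ} (ht : 0 ≤ t) (hs : 0 ≤ s) {μ : Measure ℝ}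
    (hμ : μ ∈ P2) : P t (P s μ) = P (t + s) μ := hP.2.2.1 t s ht hs μ hμ

lemma Semiflow.W2Tendsto_apply (hP : Semiflow P) {t : ℝ} (ht : 0 ≤ t) {μs : ℕ → Measure ℝ}
    {μ : Measure ℝ} (hμs : ∀ n, μs n ∈ P2) (hμ : μ ∈ P2) (h : W2Tendsto μs μ) :
    W2Tendsto (fun n => P t (μs n)) (P t μ) :=
  hP.2.2.2 (fun _ => t) t μs μ (fun _ => ht) ht tendsto_const_nhds hμs hμ h

lemma W2Tendsto.of_W2_tendsto_zero {xs ys : ℕ → Measure ℝ} {γ : Measure ℝ}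
    [IsProbabilityMeasure γ] (hy : W2Tendsto ys γ)
    (hxy : Tendsto (fun n => W2 (xs n) (ys n)) atTop (nhds 0)) : W2Tendsto xs γ := by
  refine tendsto_of_tendsto_of_tendsto_of_le_of_le tendsto_const_nhds (by simpa using hy.add hxy)
    (fun _ => zero_le) fun n => ?_
  calc W2 (xs n) γ = W2 γ (xs n) := W2_comm
    _ ≤ W2 γ (ys n) + W2 (ys n) (xs n) := W2_triangle
    _ = W2 (ys n) γ + W2 (xs n) (ys n) := by
        rw [W2_comm (μ := γ) (ν := ys n), W2_comm (μ := ys n) (ν := xs n)]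

lemma seqCompact_of_stOrder_bounded (hKP2 : K ⊆ P2) {a b : Measure ℝ} (ha : a ∈ P2)
    (hb : b ∈ P2) (hab : ∀ μ ∈ K, StOrder a μ ∧ StOrder μ b)
    (hcl : ∀ (ρ : ℕ → Measure ℝ) (ν : Measure ℝ), (∀ n, ρ n ∈ K) → ν ∈ P2 →
      W2Tendsto ρ ν → ν ∈ K) :
    SeqCompact K := fun ρ hρ => by
  have (n : ℕ) : IsProbabilityMeasure (ρ n) := isProbabilityMeasure_of_mem_P2 (hKP2 (hρ n))
  obtain ⟨φ, ν, hφ, hν, hconv⟩ := exists_subseq_W2Tendsto_of_stOrder ha hb fun n => hab _ (hρ n)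
  exact ⟨φ, ν, hφ, hcl _ ν (fun n => hρ (φ n)) hν hconv, hconv⟩

lemma boundedSet_of_stOrder_bounded (hKP2 : K ⊆ P2) {a b : Measure ℝ} (ha : a ∈ P2)
    (hb : b ∈ P2) (hab : ∀ μ ∈ K, StOrder a μ ∧ StOrder μ b) : BoundedSet K := by
  have := isProbabilityMeasure_of_mem_P2 ha
  have := isProbabilityMeasure_of_mem_P2 hb
  refine boundedSet_of_secondMoment_le (ENNReal.add_ne_top.mpr
    ⟨secondMoment_ne_top_of_mem_P2 ha, secondMoment_ne_top_of_mem_P2 hb⟩) fun μ hμ => ?_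
  have := isProbabilityMeasure_of_mem_P2 (hKP2 hμ)
  exact ⟨this, secondMoment_le_of_cdfLE (hab μ hμ).1.cdfLE (hab μ hμ).2.cdfLE⟩

lemma boundedSet_singleton {μ : Measure ℝ} (hμ : μ ∈ P2) : BoundedSet {μ} :=
  boundedSet_of_secondMoment_le (secondMoment_ne_top_of_mem_P2 hμ) fun _ hν => by
    rw [mem_singleton_iff.mp hν]; exact ⟨isProbabilityMeasure_of_mem_P2 hμ, le_rfl⟩

lemma Attracts.tendsto_iInf_W2 (h : Attracts P K B) {μs : ℕ → Measure ℝ} (hμs : ∀ n, μs n ∈ B)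
    {ts : ℕ → ℝ} (hts : Tendsto ts atTop atTop) :
    Tendsto (fun n => ⨅ ν ∈ K, W2 (P (ts n) (μs n)) ν) atTop (nhds 0) :=
  tendsto_of_tendsto_of_tendsto_of_le_of_le tendsto_const_nhds (h.comp hts) (fun _ => zero_le)
    fun n => le_iSup₂ (f := fun μ _ => ⨅ ν ∈ K, W2 (P (ts n) μ) ν) (μs n) (hμs n)

lemma exists_subseq_W2Tendsto_of_attracts (hKP2 : K ⊆ P2) (hK : SeqCompact K)
    (hattr : Attracts P K B) {μs : ℕ → Measure ℝ} (hμs : ∀ n, μs n ∈ B) {ts : ℕ → ℝ}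
    (hts : Tendsto ts atTop atTop) :
    ∃ (φ : ℕ → ℕ) (γ : Measure ℝ), StrictMono φ ∧ γ ∈ K ∧
      W2Tendsto (fun n => P (ts (φ n)) (μs (φ n))) γ := by
  obtain ⟨κ, hκK, hκ⟩ := exists_tendsto_of_tendsto_iInf (hattr.tendsto_iInf_W2 hμs hts)
  obtain ⟨φ, γ, hφ, hγK, hγ⟩ := hK κ hκK
  have := isProbabilityMeasure_of_mem_P2 (hKP2 hγK)
  exact ⟨φ, γ, hφ, hγK, hγ.of_W2_tendsto_zero (hκ.comp hφ.tendsto_atTop)⟩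

lemma exists_seq_ge_of_mem_omegaLimit {γ : Measure ℝ} (hγ : γ ∈ OmegaLimit P B) (t : ℝ) :
    ∃ (ts : ℕ → ℝ) (μs : ℕ → Measure ℝ), (∀ n, μs n ∈ B) ∧ (∀ n, t ≤ ts n) ∧
      Tendsto ts atTop atTop ∧ W2Tendsto (fun n => P (ts n) (μs n)) γ := by
  obtain ⟨-, ts, μs, hμs, hts, hγ⟩ := hγ
  obtain ⟨N, hN⟩ := eventually_atTop.mp (hts.eventually_ge_atTop t)
  exact ⟨fun n => ts (n + N), fun n => μs (n + N), fun n => hμs _,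
    fun n => hN _ (Nat.le_add_left _ _), hts.comp (tendsto_add_atTop_nat N),
    hγ.comp (tendsto_add_atTop_nat N)⟩

lemma Semiflow.map_mem_omegaLimit (hP : Semiflow P) (hB : B ⊆ P2) {γ : Measure ℝ}
    (hγ : γ ∈ OmegaLimit P B) {t : ℝ} (ht : 0 ≤ t) : P t γ ∈ OmegaLimit P B := by
  obtain ⟨ts, μs, hμs, hts0, hts, hconv⟩ := exists_seq_ge_of_mem_omegaLimit hγ 0
  refine ⟨hP.mapsTo ht hγ.1, fun n => t + ts n, μs, hμs, tendsto_atTop_add_const_left _ t hts, ?_⟩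
  have := hP.W2Tendsto_apply ht (fun n => hP.mapsTo (hts0 n) (hB (hμs n))) hγ.1 hconv
  simp only [hP.map_map ht (hts0 _) (hB (hμs _))] at this
  exact this

/-- The preimage is a limit point of the orbit shifted back by `t`. -/
lemma Semiflow.exists_mem_omegaLimit_map_eq (hP : Semiflow P) (hKP2 : K ⊆ P2)
    (hK : SeqCompact K) (hB : B ⊆ P2) (hattr : Attracts P K B) {γ : Measure ℝ}
    (hγ : γ ∈ OmegaLimit P B) {t : ℝ} (ht : 0 ≤ t) :
    ∃ η ∈ OmegaLimit P B, η ∈ K ∧ P t η = γ := by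
  obtain ⟨ts, μs, hμs, hts_ge, hts, hconv⟩ := exists_seq_ge_of_mem_omegaLimit hγ t
  have hshift : Tendsto (fun n => ts n - t) atTop atTop := tendsto_atTop_add_const_right _ _ hts
  obtain ⟨φ, η, hφ, hηK, hη⟩ := exists_subseq_W2Tendsto_of_attracts hKP2 hK hattr hμs hshift
  have hs0 (n : ℕ) : 0 ≤ ts (φ n) - t := sub_nonneg.mpr (hts_ge _)
  refine ⟨η, ⟨hKP2 hηK, _, _, fun n => hμs (φ n), hshift.comp hφ.tendsto_atTop, hη⟩, hηK, ?_⟩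
  have hPη := hP.W2Tendsto_apply ht (fun n => hP.mapsTo (hs0 n) (hB (hμs _))) (hKP2 hηK) hη
  simp only [hP.map_map ht (hs0 _) (hB (hμs _)), add_sub_cancel] at hPη
  have := isProbabilityMeasure_of_mem_P2 (hP.mapsTo ht (hKP2 hηK))
  have := isProbabilityMeasure_of_mem_P2 hγ.1
  exact hPη.unique (hconv.comp hφ.tendsto_atTop)

lemma Semiflow.invariantSet_omegaLimit (hP : Semiflow P) (hKP2 : K ⊆ P2) (hK : SeqCompact K)
    (hB : B ⊆ P2) (hattr : Attracts P K B) : InvariantSet P (OmegaLimit P B) := fun _ ht =>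
  Subset.antisymm (image_subset_iff.mpr fun _ hγ => hP.map_mem_omegaLimit hB hγ ht) fun _ hγ =>
    let ⟨η, hη, _, hηγ⟩ := hP.exists_mem_omegaLimit_map_eq hKP2 hK hB hattr hγ ht
    ⟨η, hη, hηγ⟩

lemma Semiflow.omegaLimit_subset (hP : Semiflow P) (hKP2 : K ⊆ P2) (hK : SeqCompact K)
    (hB : B ⊆ P2) (hattr : Attracts P K B) : OmegaLimit P B ⊆ K := fun γ hγ => by
  obtain ⟨η, -, hηK, hηγ⟩ := hP.exists_mem_omegaLimit_map_eq hKP2 hK hB hattr hγ le_rfl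
  rwa [← hηγ, hP.zero (hKP2 hηK)]

lemma Semiflow.omegaLimit_subset_iInter_image (hP : Semiflow P) (hKP2 : K ⊆ P2)
    (hK : SeqCompact K) (hB : B ⊆ P2) (hattr : Attracts P K B) :
    OmegaLimit P B ⊆ ⋂ t ∈ Ici (0 : ℝ), P t '' K := fun _ hγ =>
  mem_iInter₂.mpr fun _ ht =>
    let ⟨η, _, hηK, hηγ⟩ := hP.exists_mem_omegaLimit_map_eq hKP2 hK hB hattr hγ ht
    ⟨η, hηK, hηγ⟩

lemma Semiflow.iInter_image_subset_omegaLimit (hP : Semiflow P) (hKP2 : K ⊆ P2) :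
    ⋂ t ∈ Ici (0 : ℝ), P t '' K ⊆ OmegaLimit P K := fun γ hγ => by
  have hγt (t : ℝ) (ht : 0 ≤ t) : γ ∈ P t '' K := mem_iInter₂.mp hγ t ht
  obtain ⟨μ, hμK, hμγ⟩ := hγt 0 le_rfl
  rw [hP.zero (hKP2 hμK)] at hμγ
  have := isProbabilityMeasure_of_mem_P2 (hKP2 (hμγ ▸ hμK))
  choose μs hμs hμsγ using fun n : ℕ => hγt n n.cast_nonneg
  exact ⟨hKP2 (hμγ ▸ hμK), _, μs, hμs, tendsto_natCast_atTop_atTop, by simp [hμsγ, W2_self]⟩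

lemma Semiflow.omegaLimit_eq_iInter_image (hP : Semiflow P) (hKP2 : K ⊆ P2) (hK : SeqCompact K)
    (hattr : Attracts P K K) : OmegaLimit P K = ⋂ t ∈ Ici (0 : ℝ), P t '' K :=
  (hP.omegaLimit_subset_iInter_image hKP2 hK hKP2 hattr).antisymm
    (hP.iInter_image_subset_omegaLimit hKP2)

lemma Semiflow.mem_image_of_W2Tendsto (hP : Semiflow P) (hKP2 : K ⊆ P2) (hK : SeqCompact K)
    {t : ℝ} (ht : 0 ≤ t) {zs : ℕ → Measure ℝ} (hzs : ∀ n, zs n ∈ K) {γ : Measure ℝ}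
    (hγ : γ ∈ P2) (h : W2Tendsto (fun n => P t (zs n)) γ) : γ ∈ P t '' K := by
  obtain ⟨φ, η, hφ, hηK, hη⟩ := hK zs hzs
  have := isProbabilityMeasure_of_mem_P2 hγ
  have := isProbabilityMeasure_of_mem_P2 (hP.mapsTo ht (hKP2 hηK))
  exact ⟨η, hηK, (hP.W2Tendsto_apply ht (fun n => hKP2 (hzs (φ n))) (hKP2 hηK) hη).unique
    (h.comp hφ.tendsto_atTop)⟩

lemma Semiflow.seqCompact_omegaLimit (hP : Semiflow P) (hKP2 : K ⊆ P2) (hK : SeqCompact K)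
    (hattr : Attracts P K K) : SeqCompact (OmegaLimit P K) := fun ρ hρ => by
  have hΩK := hP.omegaLimit_subset hKP2 hK hKP2 hattr
  obtain ⟨φ, γ, hφ, hγK, hγ⟩ := hK ρ fun n => hΩK (hρ n)
  refine ⟨φ, γ, hφ, hP.iInter_image_subset_omegaLimit hKP2 (mem_iInter₂.mpr fun t ht => ?_), hγ⟩
  choose zs hzs hzsρ using fun n =>
    mem_iInter₂.mp (hP.omegaLimit_subset_iInter_image hKP2 hK hKP2 hattr (hρ (φ n))) t ht
  exact hP.mem_image_of_W2Tendsto hKP2 hK ht hzs (hKP2 hγK) (by simpa only [hzsρ] using hγ)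

lemma attracts_of_forall_exists_subseq
    (h : ∀ (ts : ℕ → ℝ) (μs : ℕ → Measure ℝ), (∀ n, μs n ∈ B) → Tendsto ts atTop atTop →
      ∃ (φ : ℕ → ℕ) (γ : Measure ℝ), StrictMono φ ∧ γ ∈ A ∧
        W2Tendsto (fun n => P (ts (φ n)) (μs (φ n))) γ) :
    Attracts P A B := by
  by_contra hcon
  rw [Attracts, ENNReal.tendsto_nhds_zero] at hcon
  push Not at hcon
  obtain ⟨ε, hε, hfreq⟩ := hcon
  choose ts hts hεts using fun m : ℕ => frequently_atTop.mp hfreq m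
  choose μs hμs hεμs using fun m => by simpa only [not_le, lt_iSup_iff] using hεts m
  obtain ⟨φ, γ, -, hγA, hγ⟩ := h ts μs hμs (tendsto_atTop_mono hts tendsto_natCast_atTop_atTop)
  obtain ⟨m, hm⟩ := ((ENNReal.tendsto_nhds_zero.mp hγ) ε hε).exists
  exact (hεμs (φ m)).not_ge ((iInf₂_le γ hγA).trans hm)

lemma Semiflow.attracts_omegaLimit (hP : Semiflow P) (hKP2 : K ⊆ P2) (hK : SeqCompact K)
    (hB : B ⊆ P2) (hattr : Attracts P K B) :
    Attracts P (OmegaLimit P K) B :=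
  attracts_of_forall_exists_subseq fun _ _ hμs hts =>
    let ⟨φ, γ, hφ, hγK, hγ⟩ := exists_subseq_W2Tendsto_of_attracts hKP2 hK hattr hμs hts
    have hγB : γ ∈ OmegaLimit P B :=
      ⟨hKP2 hγK, _, _, fun n => hμs (φ n), hts.comp hφ.tendsto_atTop, hγ⟩
    ⟨φ, γ, hφ, hP.iInter_image_subset_omegaLimit hKP2
      (hP.omegaLimit_subset_iInter_image hKP2 hK hB hattr hγB), hγ⟩

lemma invariant_of_forall_stOrder_le (hop : OrderPreserving P) {Ω : Set (Measure ℝ)}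
    (hΩ : Ω ⊆ P2) (hinv : InvariantSet P Ω) {ν : Measure ℝ} (hν : ν ∈ Ω)
    (hle : ∀ ρ ∈ Ω, StOrder ρ ν) : Invariant P ν := fun t ht => by
  obtain ⟨ν', hν', hν't⟩ : ν ∈ P t '' Ω := (hinv t ht).symm ▸ hν
  have hPν : P t ν ∈ Ω := hinv t ht ▸ mem_image_of_mem _ hν
  have := isProbabilityMeasure_of_mem_P2 (hΩ hν)
  have := isProbabilityMeasure_of_mem_P2 (hΩ hPν)
  refine (hle _ hPν).antisymm ?_
  simpa only [hν't] using hop t ht _ _ (hΩ hν') (hΩ hν) (hle ν' hν')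

lemma invariant_of_forall_le_stOrder (hop : OrderPreserving P) {Ω : Set (Measure ℝ)}
    (hΩ : Ω ⊆ P2) (hinv : InvariantSet P Ω) {ν : Measure ℝ} (hν : ν ∈ Ω)
    (hle : ∀ ρ ∈ Ω, StOrder ν ρ) : Invariant P ν := fun t ht => by
  obtain ⟨ν', hν', hν't⟩ : ν ∈ P t '' Ω := (hinv t ht).symm ▸ hν
  have hPν : P t ν ∈ Ω := hinv t ht ▸ mem_image_of_mem _ hν
  have := isProbabilityMeasure_of_mem_P2 (hΩ hν)
  have := isProbabilityMeasure_of_mem_P2 (hΩ hPν)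
  refine StOrder.antisymm ?_ (hle _ hPν)
  simpa only [hν't] using hop t ht _ _ (hΩ hν) (hΩ hν') (hle ν' hν')

lemma Semiflow.exists_orbit_W2Tendsto_mem_omegaLimit (hP : Semiflow P) (hKP2 : K ⊆ P2)
    (hK : SeqCompact K) {b : Measure ℝ} (hb : b ∈ P2) (hattr : Attracts P K {b}) :
    ∃ (φ : ℕ → ℕ) (ν : Measure ℝ), ν ∈ OmegaLimit P K ∧ W2Tendsto (fun n => P (φ n) b) ν := by
  obtain ⟨φ, ν, hφ, hνK, hν⟩ := exists_subseq_W2Tendsto_of_attracts hKP2 hK hattr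
    (μs := fun _ => b) (fun _ => rfl) tendsto_natCast_atTop_atTop
  exact ⟨φ, ν, hP.iInter_image_subset_omegaLimit hKP2
    (hP.omegaLimit_subset_iInter_image hKP2 hK (singleton_subset_iff.mpr hb) hattr
      ⟨hKP2 hνK, _, _, fun _ => rfl, tendsto_natCast_atTop_atTop.comp hφ.tendsto_atTop, hν⟩), hν⟩

/-- The maximal invariant measure is a limit point of the orbit of the upper bound `b` of `K`:
every `ρ ∈ ω(K)` is `P t ρ'` with `ρ' ∈ K`, so `ρ ≤ P t b` for all `t`. -/
lemma Semiflow.exists_invariant_forall_stOrder_le (hP : Semiflow P) (hop : OrderPreserving P)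
    (hKP2 : K ⊆ P2) (hK : SeqCompact K) (hattrK : Attracts P K K) {b : Measure ℝ} (hb : b ∈ P2)
    (hKb : ∀ μ ∈ K, StOrder μ b) (hattr : Attracts P K {b}) :
    ∃ ν ∈ OmegaLimit P K, Invariant P ν ∧ ∀ ρ ∈ OmegaLimit P K, StOrder ρ ν := by
  have hΩK := hP.omegaLimit_subset hKP2 hK hKP2 hattrK
  have hinv := hP.invariantSet_omegaLimit hKP2 hK hKP2 hattrK
  obtain ⟨φ, ν, hνΩ, hν⟩ := hP.exists_orbit_W2Tendsto_mem_omegaLimit hKP2 hK hb hattr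
  have := isProbabilityMeasure_of_mem_P2 (hKP2 (hΩK hνΩ))
  have hle : ∀ ρ ∈ OmegaLimit P K, StOrder ρ ν := fun ρ hρ => by
    have := isProbabilityMeasure_of_mem_P2 (hKP2 (hΩK hρ))
    refine hν.stOrder_right fun n => ?_
    obtain ⟨ρ', hρ', rfl⟩ : ρ ∈ P (φ n) '' OmegaLimit P K := (hinv _ (Nat.cast_nonneg _)).symm ▸ hρ
    exact hop _ (Nat.cast_nonneg _) _ _ (hKP2 (hΩK hρ')) hb (hKb _ (hΩK hρ'))
  exact ⟨ν, hνΩ, invariant_of_forall_stOrder_le hop (hΩK.trans hKP2) hinv hνΩ hle, hle⟩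

lemma Semiflow.exists_invariant_forall_le_stOrder (hP : Semiflow P) (hop : OrderPreserving P)
    (hKP2 : K ⊆ P2) (hK : SeqCompact K) (hattrK : Attracts P K K) {a : Measure ℝ} (ha : a ∈ P2)
    (hKa : ∀ μ ∈ K, StOrder a μ) (hattr : Attracts P K {a}) :
    ∃ ν ∈ OmegaLimit P K, Invariant P ν ∧ ∀ ρ ∈ OmegaLimit P K, StOrder ν ρ := by
  have hΩK := hP.omegaLimit_subset hKP2 hK hKP2 hattrK
  have hinv := hP.invariantSet_omegaLimit hKP2 hK hKP2 hattrK
  obtain ⟨φ, ν, hνΩ, hν⟩ := hP.exists_orbit_W2Tendsto_mem_omegaLimit hKP2 hK ha hattr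
  have := isProbabilityMeasure_of_mem_P2 (hKP2 (hΩK hνΩ))
  have hle : ∀ ρ ∈ OmegaLimit P K, StOrder ν ρ := fun ρ hρ => by
    have := isProbabilityMeasure_of_mem_P2 (hKP2 (hΩK hρ))
    refine hν.stOrder_left fun n => ?_
    obtain ⟨ρ', hρ', rfl⟩ : ρ ∈ P (φ n) '' OmegaLimit P K := (hinv _ (Nat.cast_nonneg _)).symm ▸ hρ
    exact hop _ (Nat.cast_nonneg _) _ _ ha (hKP2 (hΩK hρ')) (hKa _ (hΩK hρ'))
  exact ⟨ν, hνΩ, invariant_of_forall_le_stOrder hop (hΩK.trans hKP2) hinv hνΩ hle, hle⟩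

end Dynamics

theorem global_attractor_structure_general (P : ℝ → Measure ℝ → Measure ℝ)
    (hsf : Semiflow P) (hop : OrderPreserving P)
    (K : Set (Measure ℝ)) (hKP2 : K ⊆ P2)
    (hKob : ∃ a ∈ P2, ∃ b ∈ P2, ∀ μ ∈ K, StOrder a μ ∧ StOrder μ b)
    (hKcl : ∀ (ρ : ℕ → Measure ℝ) (ν : Measure ℝ), (∀ n, ρ n ∈ K) → ν ∈ P2 →
      W2Tendsto ρ ν → ν ∈ K)
    (hattr : ∀ B ⊆ P2, BoundedSet B → Attracts P K B) :
    (OmegaLimit P K = ⋂ t ∈ Set.Ici (0:ℝ), P t '' K) ∧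
    SeqCompact (OmegaLimit P K) ∧
    InvariantSet P (OmegaLimit P K) ∧
    (∀ B ⊆ P2, BoundedSet B → Attracts P (OmegaLimit P K) B) ∧
    ∃ νlo ∈ OmegaLimit P K, ∃ νhi ∈ OmegaLimit P K,
      Invariant P νlo ∧ Invariant P νhi ∧
      (∀ ρ ∈ OmegaLimit P K, StOrder νlo ρ ∧ StOrder ρ νhi) ∧
      (∀ l ∈ P2, (∀ ρ ∈ OmegaLimit P K, StOrder l ρ) → StOrder l νlo) ∧
      (∀ u ∈ P2, (∀ ρ ∈ OmegaLimit P K, StOrder ρ u) → StOrder νhi u) := by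
  obtain ⟨a, ha, b, hb, hab⟩ := hKob
  have hK : SeqCompact K := seqCompact_of_stOrder_bounded hKP2 ha hb hab hKcl
  have hattrK : Attracts P K K := hattr K hKP2 (boundedSet_of_stOrder_bounded hKP2 ha hb hab)
  have hattr₁ {μ : Measure ℝ} (hμ : μ ∈ P2) : Attracts P K {μ} :=
    hattr _ (singleton_subset_iff.mpr hμ) (boundedSet_singleton hμ)
  obtain ⟨νlo, hνlo, hlo_inv, hlo⟩ := hsf.exists_invariant_forall_le_stOrder hop hKP2 hK hattrK ha
    (fun μ hμ => (hab μ hμ).1) (hattr₁ ha)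
  obtain ⟨νhi, hνhi, hhi_inv, hhi⟩ := hsf.exists_invariant_forall_stOrder_le hop hKP2 hK hattrK hb
    (fun μ hμ => (hab μ hμ).2) (hattr₁ hb)
  refine ⟨hsf.omegaLimit_eq_iInter_image hKP2 hK hattrK, hsf.seqCompact_omegaLimit hKP2 hK hattrK,
    hsf.invariantSet_omegaLimit hKP2 hK hKP2 hattrK,
    fun B hB hBb => hsf.attracts_omegaLimit hKP2 hK hB (hattr B hB hBb),
    νlo, hνlo, νhi, hνhi, hlo_inv, hhi_inv, fun ρ hρ => ⟨hlo ρ hρ, hhi ρ hρ⟩,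
    fun _ _ hl => hl νlo hνlo, fun _ _ hu => hu νhi hνhi⟩

/-- If an order-preserving semiflow `P*` on `𝒫₂(ℝ)` has an eventually
positively invariant, order bounded, closed set `K` attracting every bounded set, then
`ω(K) = ⋂_{t≥0} P*ₜ K` is the global attractor (compact, invariant, attracting every
bounded set), and there are invariant measures `ν̲ = inf ω(K)` and `ν̄ = sup ω(K)`,
both in `ω(K)`, with `ω(K) ⊆ [ν̲, ν̄]`. -/
theorem global_attractor_structure (P : ℝ → Measure ℝ → Measure ℝ)
    (hsf : Semiflow P) (hop : OrderPreserving P)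
    (K : Set (Measure ℝ)) (hKP2 : K ⊆ P2)
    (hKepi : ∃ t₀ : ℝ, 0 ≤ t₀ ∧ ∀ t : ℝ, t₀ ≤ t → ∀ μ ∈ K, P t μ ∈ K)
    (hKob : ∃ a ∈ P2, ∃ b ∈ P2, ∀ μ ∈ K, StOrder a μ ∧ StOrder μ b)
    (hKcl : ∀ (ρ : ℕ → Measure ℝ) (ν : Measure ℝ), (∀ n, ρ n ∈ K) → ν ∈ P2 →
      W2Tendsto ρ ν → ν ∈ K)
    (hattr : ∀ B ⊆ P2, BoundedSet B → Attracts P K B) :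
    (OmegaLimit P K = ⋂ t ∈ Set.Ici (0:ℝ), P t '' K) ∧
    SeqCompact (OmegaLimit P K) ∧
    InvariantSet P (OmegaLimit P K) ∧
    (∀ B ⊆ P2, BoundedSet B → Attracts P (OmegaLimit P K) B) ∧
    ∃ νlo ∈ OmegaLimit P K, ∃ νhi ∈ OmegaLimit P K,
      Invariant P νlo ∧ Invariant P νhi ∧
      (∀ ρ ∈ OmegaLimit P K, StOrder νlo ρ ∧ StOrder ρ νhi) ∧
      (∀ l ∈ P2, (∀ ρ ∈ OmegaLimit P K, StOrder l ρ) → StOrder l νlo) ∧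
      (∀ u ∈ P2, (∀ ρ ∈ OmegaLimit P K, StOrder ρ u) → StOrder νhi u) :=
  global_attractor_structure_general P hsf hop K hKP2 hKob hKcl hattr
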